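/- arXiv:2312.16699 — 5 statements merged into one kernel-verified Lean document; each statement's English description precedes it below -/
import Mathlib

section
/- (Correctness of the big-M ReLU formulation, forward direction.) Let LB, UB, a ∈ ℝ with LB ≤ 0 ≤ UB and LB ≤ a ≤ UB. Define h = max(a, 0), h̄ = max(−a, 0), and z = 1 if a > 0 and z = 0 otherwise. Then a = h − h̄, 0 ≤ h ≤ UB·z, 0 ≤ h̄ ≤ −LB·(1 − z), and z ∈ {0, 1}. In other words, the true ReLU input-output pair is always feasible for the big-M mixed-integer constraints whenever LB and UB are valid activation bounds. -/
theorem max_zero_le_mul_ite_pos {α : Type*} [Ring α] [LinearOrder α] {a U : α} (haU : a ≤ U) :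
    max a 0 ≤ U * (if 0 < a then 1 else 0) := by
  split_ifs with ha
  · simpa [ha.le] using haU
  · simpa using not_lt.mp ha

theorem max_neg_zero_le_neg_mul_one_sub_ite_pos {α : Type*} [Ring α] [LinearOrder α]
    [IsOrderedAddMonoid α] {a L : α} (hLa : L ≤ a) :
    max (-a) 0 ≤ -L * (1 - if 0 < a then 1 else 0) := by
  split_ifs with ha
  · simpa using ha.le
  · simpa [neg_nonneg.mpr (not_lt.mp ha)] using hLa

theorem bigM_relu_forward_general (LB UB a : ℝ)
    (haLB : LB ≤ a) (haUB : a ≤ UB)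
    (h hbar z : ℝ)
    (hh : h = max a 0) (hhbar : hbar = max (-a) 0)
    (hz : z = if 0 < a then 1 else 0) :
    a = h - hbar ∧ 0 ≤ h ∧ h ≤ UB * z ∧ 0 ≤ hbar ∧ hbar ≤ -LB * (1 - z) ∧
      (z = 0 ∨ z = 1) := by
  subst hh hhbar hz
  exact ⟨(max_zero_sub_max_neg_zero_eq_self a).symm, le_max_right _ _,
    max_zero_le_mul_ite_pos haUB, le_max_right _ _,
    max_neg_zero_le_neg_mul_one_sub_ite_pos haLB, (ite_eq_or_eq _ _ _).symm⟩

/-- Correctness of the big-M ReLU formulation, forward direction: the true ReLU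
input-output pair, together with `h̄ = max (−a) 0` and the indicator `z` of `a > 0`,
is feasible for the big-M mixed-integer constraints whenever `LB ≤ 0 ≤ UB` are
valid activation bounds and `LB ≤ a ≤ UB`. -/
theorem bigM_relu_forward (LB UB a : ℝ)
    (hLB : LB ≤ 0) (hUB : 0 ≤ UB) (haLB : LB ≤ a) (haUB : a ≤ UB)
    (h hbar z : ℝ)
    (hh : h = max a 0) (hhbar : hbar = max (-a) 0)
    (hz : z = if 0 < a then 1 else 0) :
    a = h - hbar ∧ 0 ≤ h ∧ h ≤ UB * z ∧ 0 ≤ hbar ∧ hbar ≤ -LB * (1 - z) ∧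
      (z = 0 ∨ z = 1) :=
  bigM_relu_forward_general LB UB a haLB haUB h hbar z hh hhbar hz
end

section
/- (Correctness of the big-M ReLU formulation, converse direction.) Let LB, UB, a, h, h̄, z ∈ ℝ satisfy a = h − h̄, 0 ≤ h ≤ UB·z, 0 ≤ h̄ ≤ −LB·(1 − z), and z ∈ {0, 1}. Then h = max(a, 0), i.e., every feasible point of the big-M mixed-integer constraints computes exactly the ReLU function. -/
/-!
The binary variable `z` switches off one of the two big-M bounds and forces the
other variable to zero, so `h` and `h̄` are complementary. A difference `h - h̄`
of complementary nonnegative numbers has `h` as its positive part.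
-/

theorem eq_max_zero_of_eq_sub_of_complementary {α : Type*} [AddCommGroup α] [LinearOrder α]
    [IsOrderedAddMonoid α] {a h h' : α} (ha : a = h - h') (hh : 0 ≤ h) (hh' : 0 ≤ h')
    (hc : h = 0 ∨ h' = 0) : h = max a 0 := by
  rcases hc with rfl | rfl <;> simp [ha, hh, hh']

theorem bigM_complementary {α : Type*} [Ring α] [LinearOrder α] [IsOrderedRing α]
    {LB UB h h' z : α} (hh : 0 ≤ h) (hhub : h ≤ UB * z) (hh' : 0 ≤ h')
    (hh'ub : h' ≤ -LB * (1 - z)) (hz : z = 0 ∨ z = 1) : h = 0 ∨ h' = 0 := by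
  rcases hz with rfl | rfl
  · exact .inl (le_antisymm (by simpa using hhub) hh)
  · exact .inr (le_antisymm (by simpa using hh'ub) hh')

/-- Correctness of the big-M ReLU formulation, converse direction: every feasible
point of the big-M mixed-integer constraints computes exactly the ReLU function,
i.e. `h = max a 0`. -/
theorem bigM_relu_converse (LB UB a h hbar z : ℝ)
    (heq : a = h - hbar)
    (hh0 : 0 ≤ h) (hhub : h ≤ UB * z)
    (hhbar0 : 0 ≤ hbar) (hhbarub : hbar ≤ -LB * (1 - z))
    (hz : z = 0 ∨ z = 1) :
    h = max a 0 :=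
  eq_max_zero_of_eq_sub_of_complementary heq hh0 hhbar0
    (bigM_complementary hh0 hhub hhbar0 hhbarub hz)
end

section
/- (Validity of the MILP bound-tightening formulation.) Consider a fully connected feed-forward ReLU network with layers 0,…,m (m ≥ 1): widths n_0,…,n_m ≥ 1, weight matrices W^{(l)} ∈ ℝ^{n_l×n_{l+1}} and biases b^{(l+1)} ∈ ℝ^{n_{l+1}}; on input x it computes h^{(0)} = x, a^{(l+1)} = (W^{(l)})ᵀ h^{(l)} + b^{(l+1)}, h^{(l+1)}_j = max(a^{(l+1)}_j, 0). Let LB⁰, UB⁰ ∈ ℝ^{n_0} and, for each hidden layer l ∈ {1,…,m−1}, let LB^{(l)}, UB^{(l)} ∈ ℝ^{n_l} be bounds. Fix an input x with LB⁰_j ≤ x_j ≤ UB⁰_j for all j whose pre-activations satisfy LB^{(l)}_j ≤ a^{(l)}_j ≤ UB^{(l)}_j for all l ∈ {1,…,m−1} and all j. Define, for each l ∈ {1,…,m−1} and j, h̄^{(l)}_j = max(−a^{(l)}_j, 0) and z^{(l)}_j = 1 if a^{(l)}_j > 0, else 0. Then the point (h^{(0)},…,h^{(m−1)}, h̄^{(1)},…,h̄^{(m−1)},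 z^{(1)},…,z^{(m−1)}) satisfies all the MILP constraints: (W^{(l)})ᵀ h^{(l)} + b^{(l+1)} = a^{(l+1)} for l = 0,…,m−1; a^{(l)} = h^{(l)} − h̄^{(l)}, 0 ≤ h^{(l)}_j ≤ UB^{(l)}_j z^{(l)}_j, 0 ≤ h̄^{(l)}_j ≤ −LB^{(l)}_j (1 − z^{(l)}_j), z^{(l)}_j ∈ {0,1} for l = 1,…,m−1; and LB⁰_j ≤ h^{(0)}_j ≤ UB⁰_j. In particular, the optimal value of the MILP that maximizes a^{(m)}_n over these constraints is an upper bound on a^{(m)}_n(x). -/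
/-! A neuron's pre-activation `a` splits as `a = max a 0 - max (-a) 0` into its ReLU output and
its negative part, at most one of which is nonzero; the indicator `z = 𝟙[a > 0]` records which.
The big-M constraints `h ≤ UB z`, `h̄ ≤ -LB (1 - z)` then only restate `LB ≤ a ≤ UB`. -/

/-- The big-M encoding of `h = ReLU a` for one neuron with pre-activation bounds `[L, U]`. -/
def IsBigMReLU (L U a h hbar z : ℝ) : Prop :=
  a = h - hbar ∧ 0 ≤ h ∧ h ≤ U * z ∧ 0 ≤ hbar ∧ hbar ≤ -L * (1 - z) ∧ (z = 0 ∨ z = 1)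

theorem isBigMReLU_relu {L U a : ℝ} (hL : L ≤ a) (hU : a ≤ U) :
    IsBigMReLU L U a (max a 0) (max (-a) 0) (if 0 < a then 1 else 0) := by
  rcases lt_or_ge 0 a with hpos | hnonpos
  · rw [if_pos hpos, max_eq_left hpos.le, max_eq_right (by linarith)]
    exact ⟨by ring, hpos.le, by linarith, le_rfl, by linarith, Or.inr rfl⟩
  · rw [if_neg hnonpos.not_gt, max_eq_right hnonpos, max_eq_left (by linarith)]
    exact ⟨by ring, le_rfl, by linarith, by linarith, by linarith, Or.inl rfl⟩

theorem milp_bound_tightening_valid_general (m' : ℕ)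
    (n : ℕ → ℕ)
    (W : ∀ l : ℕ, Matrix (Fin (n l)) (Fin (n (l + 1))) ℝ)
    -- `b l` is the bias vector `b^{(l+1)} ∈ ℝ^{n_{l+1}}`
    (b : ∀ l : ℕ, Fin (n (l + 1)) → ℝ)
    -- `LB l`, `UB l` are the bounds for layer `l` (input layer for `l = 0`)
    (LB UB : ∀ l : ℕ, Fin (n l) → ℝ)
    (x : Fin (n 0) → ℝ)
    (h : ∀ l : ℕ, Fin (n l) → ℝ)
    -- `a l` is the pre-activation vector `a^{(l+1)} ∈ ℝ^{n_{l+1}}`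
    (a : ∀ l : ℕ, Fin (n (l + 1)) → ℝ)
    (hh0 : h 0 = x)
    (haff : ∀ l, l ≤ m' → ∀ i : Fin (n (l + 1)),
      a l i = (∑ j : Fin (n l), W l j i * h l j) + b l i)
    (hrelu : ∀ l, l < m' → ∀ i : Fin (n (l + 1)), h (l + 1) i = max (a l i) 0)
    (hx : ∀ j : Fin (n 0), LB 0 j ≤ x j ∧ x j ≤ UB 0 j)
    (hvalid : ∀ l, l < m' → ∀ i : Fin (n (l + 1)),
      LB (l + 1) i ≤ a l i ∧ a l i ≤ UB (l + 1) i)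
    -- `hbar (l+1)` and `z (l+1)` are defined as `max (−a^{(l+1)}) 0` and `𝟙[a^{(l+1)} > 0]`
    (hbar z : ∀ l : ℕ, Fin (n (l + 1)) → ℝ)
    (hhbar : ∀ l, l < m' → ∀ i : Fin (n (l + 1)), hbar l i = max (-(a l i)) 0)
    (hz : ∀ l, l < m' → ∀ i : Fin (n (l + 1)),
      z l i = if 0 < a l i then 1 else 0) :
    -- the point satisfies all the MILP constraints:
    (∀ l, l ≤ m' → ∀ i : Fin (n (l + 1)),
      (∑ j : Fin (n l), W l j i * h l j) + b l i = a l i) ∧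
    (∀ l, l < m' → ∀ i : Fin (n (l + 1)),
      a l i = h (l + 1) i - hbar l i ∧
      0 ≤ h (l + 1) i ∧ h (l + 1) i ≤ UB (l + 1) i * z l i ∧
      0 ≤ hbar l i ∧ hbar l i ≤ -(LB (l + 1) i) * (1 - z l i) ∧
      (z l i = 0 ∨ z l i = 1)) ∧
    (∀ j : Fin (n 0), LB 0 j ≤ h 0 j ∧ h 0 j ≤ UB 0 j) := by
  refine ⟨fun l hl i => (haff l hl i).symm, fun l hl i => ?_, fun j => hh0 ▸ hx j⟩
  rw [hrelu l hl i, hhbar l hl i, hz l hl i]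
  exact isBigMReLU_relu (hvalid l hl i).1 (hvalid l hl i).2

/-- Validity of the MILP bound-tightening formulation: for a fully connected
feed-forward ReLU network with layers `0, …, m` (here `m = m' + 1 ≥ 1`), any input
`x ∈ [LB⁰, UB⁰]` whose hidden-layer pre-activations respect the given bounds gives
rise, via `h̄ = max (−a) 0` and `z = 𝟙[a > 0]`, to a point satisfying all the MILP
constraints of the bound-tightening problem. -/
theorem milp_bound_tightening_valid (m' : ℕ)
    (n : ℕ → ℕ) (hwidth : ∀ l, l ≤ m' + 1 → 1 ≤ n l)
    (W : ∀ l : ℕ, Matrix (Fin (n l)) (Fin (n (l + 1))) ℝ)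
    -- `b l` is the bias vector `b^{(l+1)} ∈ ℝ^{n_{l+1}}`
    (b : ∀ l : ℕ, Fin (n (l + 1)) → ℝ)
    -- `LB l`, `UB l` are the bounds for layer `l` (input layer for `l = 0`)
    (LB UB : ∀ l : ℕ, Fin (n l) → ℝ)
    (x : Fin (n 0) → ℝ)
    (h : ∀ l : ℕ, Fin (n l) → ℝ)
    -- `a l` is the pre-activation vector `a^{(l+1)} ∈ ℝ^{n_{l+1}}`
    (a : ∀ l : ℕ, Fin (n (l + 1)) → ℝ)
    (hh0 : h 0 = x)
    (haff : ∀ l, l ≤ m' → ∀ i : Fin (n (l + 1)),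
      a l i = (∑ j : Fin (n l), W l j i * h l j) + b l i)
    (hrelu : ∀ l, l < m' → ∀ i : Fin (n (l + 1)), h (l + 1) i = max (a l i) 0)
    (hx : ∀ j : Fin (n 0), LB 0 j ≤ x j ∧ x j ≤ UB 0 j)
    (hvalid : ∀ l, l < m' → ∀ i : Fin (n (l + 1)),
      LB (l + 1) i ≤ a l i ∧ a l i ≤ UB (l + 1) i)
    -- `hbar (l+1)` and `z (l+1)` are defined as `max (−a^{(l+1)}) 0` and `𝟙[a^{(l+1)} > 0]`
    (hbar z : ∀ l : ℕ, Fin (n (l + 1)) → ℝ)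
    (hhbar : ∀ l, l < m' → ∀ i : Fin (n (l + 1)), hbar l i = max (-(a l i)) 0)
    (hz : ∀ l, l < m' → ∀ i : Fin (n (l + 1)),
      z l i = if 0 < a l i then 1 else 0) :
    -- the point satisfies all the MILP constraints:
    (∀ l, l ≤ m' → ∀ i : Fin (n (l + 1)),
      (∑ j : Fin (n l), W l j i * h l j) + b l i = a l i) ∧
    (∀ l, l < m' → ∀ i : Fin (n (l + 1)),
      a l i = h (l + 1) i - hbar l i ∧
      0 ≤ h (l + 1) i ∧ h (l + 1) i ≤ UB (l + 1) i * z l i ∧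
      0 ≤ hbar l i ∧ hbar l i ≤ -(LB (l + 1) i) * (1 - z l i) ∧
      (z l i = 0 ∨ z l i = 1)) ∧
    (∀ j : Fin (n 0), LB 0 j ≤ h 0 j ∧ h 0 j ≤ UB 0 j) :=
  milp_bound_tightening_valid_general m' n W b LB UB x h a hh0 haff hrelu hx hvalid hbar z hhbar hz
end

section
/- (Exactness of the MILP bound-tightening formulation.) Consider weight matrices W^{(l)} ∈ ℝ^{n_l×n_{l+1}} and biases b^{(l+1)} ∈ ℝ^{n_{l+1}} for l = 0,…,m−1 (m ≥ 1, all widths ≥ 1), input bounds LB⁰, UB⁰ ∈ ℝ^{n_0}, and hidden-layer bounds LB^{(l)}, UB^{(l)} ∈ ℝ^{n_l} for l ∈ {1,…,m−1}. Suppose vectors h^{(0)},…,h^{(m−1)}, h̄^{(1)},…,h̄^{(m−1)}, z^{(1)},…,z^{(m−1)}, a^{(1)},…,a^{(m)} satisfy: (W^{(l)})ᵀ h^{(l)} + b^{(l+1)} = a^{(l+1)} for l = 0,…,m−1; a^{(l)} = h^{(l)} − h̄^{(l)}, 0 ≤ h^{(l)}_j ≤ UB^{(l)}_j z^{(l)}_j,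 0 ≤ h̄^{(l)}_j ≤ −LB^{(l)}_j (1 − z^{(l)}_j), z^{(l)}_j ∈ {0,1} for l = 1,…,m−1 and all j; and LB⁰_j ≤ h^{(0)}_j ≤ UB⁰_j. Then for every l ∈ {1,…,m−1} and every j, h^{(l)}_j = max(a^{(l)}_j, 0); that is, every MILP-feasible point coincides with the actual evaluation of the ReLU network on the input x = h^{(0)} ∈ [LB⁰, UB⁰]. -/
theorem eq_max_zero_of_bigM_relu {a h hbar z lb ub : ℝ} (ha : a = h - hbar)
    (h_nonneg : 0 ≤ h) (h_le : h ≤ ub * z) (hbar_nonneg : 0 ≤ hbar)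
    (hbar_le : hbar ≤ -lb * (1 - z)) (hz : z = 0 ∨ z = 1) :
    h = max a 0 := by
  rcases hz with rfl | rfl
  · have h_eq_zero : h = 0 := le_antisymm (by simpa using h_le) h_nonneg
    have a_nonpos : a ≤ 0 := by linarith
    rw [h_eq_zero, max_eq_right a_nonpos]
  · have hbar_eq_zero : hbar = 0 := le_antisymm (by simpa using hbar_le) hbar_nonneg
    have a_eq_h : a = h := by linarith
    rw [a_eq_h, max_eq_left h_nonneg]

theorem milp_bound_tightening_exact_general (m' : ℕ)
    (n : ℕ → ℕ)
    -- `LB l`, `UB l` are the bounds for layer `l` (input layer for `l = 0`)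
    (LB UB : ∀ l : ℕ, Fin (n l) → ℝ)
    (h : ∀ l : ℕ, Fin (n l) → ℝ)
    -- `a l`, `hbar l`, `z l` live in layer `l + 1`
    (a hbar z : ∀ l : ℕ, Fin (n (l + 1)) → ℝ)
    (hmilp : ∀ l, l < m' → ∀ i : Fin (n (l + 1)),
      a l i = h (l + 1) i - hbar l i ∧
      0 ≤ h (l + 1) i ∧ h (l + 1) i ≤ UB (l + 1) i * z l i ∧
      0 ≤ hbar l i ∧ hbar l i ≤ -(LB (l + 1) i) * (1 - z l i) ∧
      (z l i = 0 ∨ z l i = 1)) :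
    ∀ l, l < m' → ∀ i : Fin (n (l + 1)), h (l + 1) i = max (a l i) 0 := by
  intro l hl i
  obtain ⟨ha, h_nonneg, h_le, hbar_nonneg, hbar_le, hz⟩ := hmilp l hl i
  exact eq_max_zero_of_bigM_relu ha h_nonneg h_le hbar_nonneg hbar_le hz

/-- Exactness of the MILP bound-tightening formulation: every point feasible for the
MILP constraints (with `m = m' + 1 ≥ 1` layers) coincides with the actual evaluation
of the ReLU network on the input `x = h⁰ ∈ [LB⁰, UB⁰]`, i.e. each hidden activation
satisfies `h^{(l+1)} = max (a^{(l+1)}) 0`. -/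
theorem milp_bound_tightening_exact (m' : ℕ)
    (n : ℕ → ℕ) (hwidth : ∀ l, l ≤ m' + 1 → 1 ≤ n l)
    (W : ∀ l : ℕ, Matrix (Fin (n l)) (Fin (n (l + 1))) ℝ)
    -- `b l` is the bias vector `b^{(l+1)} ∈ ℝ^{n_{l+1}}`
    (b : ∀ l : ℕ, Fin (n (l + 1)) → ℝ)
    -- `LB l`, `UB l` are the bounds for layer `l` (input layer for `l = 0`)
    (LB UB : ∀ l : ℕ, Fin (n l) → ℝ)
    (h : ∀ l : ℕ, Fin (n l) → ℝ)
    -- `a l`, `hbar l`, `z l` live in layer `l + 1`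
    (a hbar z : ∀ l : ℕ, Fin (n (l + 1)) → ℝ)
    (haff : ∀ l, l ≤ m' → ∀ i : Fin (n (l + 1)),
      (∑ j : Fin (n l), W l j i * h l j) + b l i = a l i)
    (hmilp : ∀ l, l < m' → ∀ i : Fin (n (l + 1)),
      a l i = h (l + 1) i - hbar l i ∧
      0 ≤ h (l + 1) i ∧ h (l + 1) i ≤ UB (l + 1) i * z l i ∧
      0 ≤ hbar l i ∧ hbar l i ≤ -(LB (l + 1) i) * (1 - z l i) ∧
      (z l i = 0 ∨ z l i = 1))
    (hbox : ∀ j : Fin (n 0), LB 0 j ≤ h 0 j ∧ h 0 j ≤ UB 0 j) :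
    ∀ l, l < m' → ∀ i : Fin (n (l + 1)), h (l + 1) i = max (a l i) 0 :=
  milp_bound_tightening_exact_general m' n LB UB h a hbar z hmilp
end

section
/- (The MILP value set equals the true pre-activation value set.) Consider a fully connected feed-forward ReLU network with layers 0,…,m (m ≥ 1): widths n_0,…,n_m ≥ 1, weight matrices W^{(l)} ∈ ℝ^{n_l×n_{l+1}} and biases b^{(l+1)} ∈ ℝ^{n_{l+1}}; on input x it computes h^{(0)} = x, a^{(l+1)}(x) = (W^{(l)})ᵀ h^{(l)} + b^{(l+1)}, h^{(l+1)}_j = max(a^{(l+1)}_j, 0). Let LB⁰, UB⁰ ∈ ℝ^{n_0} and let LB^{(l)}, UB^{(l)} ∈ ℝ^{n_l} (l ∈ {1,…,m−1}) be valid bounds, meaning LB^{(l)}_j ≤ a^{(l)}_j(x) ≤ UB^{(l)}_j for every input x with LB⁰ ≤ x ≤ UB⁰ componentwise. Fix a neuron index n in layer m. Then the set of values { a^{(m)}_n taken over all points feasible for the MILP constraints ((W^{(l)})ᵀ h^{(l)} + b^{(l+1)} = a^{(l+1)}; a^{(l)} = h^{(l)} − h̄^{(l)}; 0 ≤ h^{(l)}_j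 ≤ UB^{(l)}_j z^{(l)}_j; 0 ≤ h̄^{(l)}_j ≤ −LB^{(l)}_j(1 − z^{(l)}_j); z^{(l)}_j ∈ {0,1}; LB⁰ ≤ h^{(0)} ≤ UB⁰) } is equal to the set { a^{(m)}_n(x) : x ∈ ℝ^{n_0}, LB⁰ ≤ x ≤ UB⁰ }. In particular, the MILP optimal value equals the exact maximum of a^{(m)}_n over the input box. -/
/-!
With `z ∈ {0, 1}`, the big-M constraints force one of `h`, `h̄` to vanish, so they hold exactly
when `h = max a 0`, `h̄ = max (-a) 0` and `z` indicates `a ≥ 0` — provided `LB ≤ a ≤ UB`, which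
is what validity of the bounds guarantees along true network traces. Hence the `h`-part of a
feasible point is the network's trace on the input `h⁰`, and conversely every trace on an input
in the box extends to a feasible point.
-/

/-- The activation output `h^{(l)}` of layer `l` of a fully connected feed-forward
ReLU network with weights `W` and biases `b` (where `b l` is `b^{(l+1)}`), on input `x`. -/
noncomputable def netH (n : ℕ → ℕ)
    (W : ∀ l : ℕ, Matrix (Fin (n l)) (Fin (n (l + 1))) ℝ)
    (b : ∀ l : ℕ, Fin (n (l + 1)) → ℝ)
    (x : Fin (n 0) → ℝ) : ∀ l : ℕ, Fin (n l) → ℝ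
  | 0 => x
  | l + 1 => fun i => max ((∑ j : Fin (n l), W l j i * netH n W b x l j) + b l i) 0

/-- The pre-activation `a^{(l+1)}` of layer `l + 1` of the network on input `x`. -/
noncomputable def netA (n : ℕ → ℕ)
    (W : ∀ l : ℕ, Matrix (Fin (n l)) (Fin (n (l + 1))) ℝ)
    (b : ∀ l : ℕ, Fin (n (l + 1)) → ℝ)
    (x : Fin (n 0) → ℝ) (l : ℕ) : Fin (n (l + 1)) → ℝ :=
  fun i => (∑ j : Fin (n l), W l j i * netH n W b x l j) + b l i

def BigMReLU (L U a h hbar z : ℝ) : Prop :=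
  a = h - hbar ∧ 0 ≤ h ∧ h ≤ U * z ∧ 0 ≤ hbar ∧ hbar ≤ -L * (1 - z) ∧ (z = 0 ∨ z = 1)

namespace BigMReLU

variable {L U a h hbar z : ℝ}

theorem eq_max (hc : BigMReLU L U a h hbar z) : h = max a 0 := by
  obtain ⟨rfl, h_nonneg, h_le, hbar_nonneg, hbar_le, rfl | rfl⟩ := hc
  · have h_eq : h = 0 := le_antisymm (by simpa using h_le) h_nonneg
    rw [h_eq, max_eq_right (by linarith)]
  · have hbar_eq : hbar = 0 := le_antisymm (by simpa using hbar_le) hbar_nonneg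
    rw [hbar_eq, sub_zero, max_eq_left h_nonneg]

theorem of_mem_Icc (hL : L ≤ a) (hU : a ≤ U) :
    BigMReLU L U a (max a 0) (max (-a) 0) (if 0 ≤ a then 1 else 0) := by
  by_cases ha : 0 ≤ a
  · simp only [if_pos ha, max_eq_left ha, max_eq_right (neg_nonpos.mpr ha)]
    refine ⟨by ring, ha, by linarith, le_rfl, by simp, Or.inr rfl⟩
  · have ha' : a ≤ 0 := (not_le.mp ha).le
    simp only [if_neg ha, max_eq_right ha', max_eq_left (neg_nonneg.mpr ha')]
    refine ⟨by ring, le_rfl, by simp, neg_nonneg.mpr ha', by linarith, Or.inl rfl⟩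

end BigMReLU

section Network

variable {n : ℕ → ℕ} {W : ∀ l : ℕ, Matrix (Fin (n l)) (Fin (n (l + 1))) ℝ}
  {b : ∀ l : ℕ, Fin (n (l + 1)) → ℝ}

theorem netH_succ (x : Fin (n 0) → ℝ) (l : ℕ) (i : Fin (n (l + 1))) :
    netH n W b x (l + 1) i = max (netA n W b x l i) 0 :=
  rfl

theorem eq_netH_of_relu_step (m : ℕ) (h : ∀ l : ℕ, Fin (n l) → ℝ)
    (hstep : ∀ l < m, ∀ i : Fin (n (l + 1)),
      h (l + 1) i = max ((∑ j : Fin (n l), W l j i * h l j) + b l i) 0) :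
    ∀ l ≤ m, h l = netH n W b (h 0) l := by
  intro l
  induction l with
  | zero => intro _; rfl
  | succ l ih =>
    intro hl
    funext i
    rw [hstep l hl i, ih (Nat.le_of_succ_le hl)]
    rfl

end Network

theorem milp_value_set_eq_true_value_set_general (m' : ℕ)
    (n : ℕ → ℕ)
    (W : ∀ l : ℕ, Matrix (Fin (n l)) (Fin (n (l + 1))) ℝ)
    (b : ∀ l : ℕ, Fin (n (l + 1)) → ℝ)
    (LB UB : ∀ l : ℕ, Fin (n l) → ℝ)
    (hvalid : ∀ x : Fin (n 0) → ℝ, (∀ j, LB 0 j ≤ x j ∧ x j ≤ UB 0 j) →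
      ∀ l, l < m' → ∀ i : Fin (n (l + 1)),
        LB (l + 1) i ≤ netA n W b x l i ∧ netA n W b x l i ≤ UB (l + 1) i)
    (nIdx : Fin (n (m' + 1))) :
    {v : ℝ | ∃ (h : ∀ l : ℕ, Fin (n l) → ℝ) (a hbar z : ∀ l : ℕ, Fin (n (l + 1)) → ℝ),
        (∀ l, l ≤ m' → ∀ i : Fin (n (l + 1)),
          (∑ j : Fin (n l), W l j i * h l j) + b l i = a l i) ∧
        (∀ l, l < m' → ∀ i : Fin (n (l + 1)),
          a l i = h (l + 1) i - hbar l i ∧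
          0 ≤ h (l + 1) i ∧ h (l + 1) i ≤ UB (l + 1) i * z l i ∧
          0 ≤ hbar l i ∧ hbar l i ≤ -(LB (l + 1) i) * (1 - z l i) ∧
          (z l i = 0 ∨ z l i = 1)) ∧
        (∀ j : Fin (n 0), LB 0 j ≤ h 0 j ∧ h 0 j ≤ UB 0 j) ∧
        v = a m' nIdx} =
      {v : ℝ | ∃ x : Fin (n 0) → ℝ,
        (∀ j, LB 0 j ≤ x j ∧ x j ≤ UB 0 j) ∧ v = netA n W b x m' nIdx} := by
  ext v
  constructor
  · rintro ⟨h, a, hbar, z, h_affine, h_relu, h_box, rfl⟩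
    have h_trace : ∀ l ≤ m', h l = netH n W b (h 0) l :=
      eq_netH_of_relu_step m' h fun l hl i => by
        rw [h_affine l hl.le i]
        exact BigMReLU.eq_max (h_relu l hl i)
    refine ⟨h 0, h_box, ?_⟩
    rw [← h_affine m' le_rfl nIdx, h_trace m' le_rfl]
    rfl
  · rintro ⟨x, h_box, rfl⟩
    refine ⟨netH n W b x, netA n W b x, fun l i => max (-netA n W b x l i) 0,
      fun l i => if 0 ≤ netA n W b x l i then 1 else 0,
      fun _ _ _ => rfl, fun l hl i => ?_, h_box, rfl⟩
    obtain ⟨hL, hU⟩ := hvalid x h_box l hl i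
    rw [netH_succ]
    exact BigMReLU.of_mem_Icc hL hU

/-- The MILP value set equals the true pre-activation value set: if the hidden-layer
bounds `LB^{(l)}, UB^{(l)}` are valid over the input box `[LB⁰, UB⁰]`, then the set of
values of `a^{(m)}_nIdx` over all MILP-feasible points equals the set of values
`a^{(m)}_nIdx(x)` over all inputs `x` in the box (here `m = m' + 1 ≥ 1`). In
particular the MILP optimal value equals the exact maximum over the input box. -/
theorem milp_value_set_eq_true_value_set (m' : ℕ)
    (n : ℕ → ℕ) (hwidth : ∀ l, l ≤ m' + 1 → 1 ≤ n l)
    (W : ∀ l : ℕ, Matrix (Fin (n l)) (Fin (n (l + 1))) ℝ)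
    (b : ∀ l : ℕ, Fin (n (l + 1)) → ℝ)
    (LB UB : ∀ l : ℕ, Fin (n l) → ℝ)
    (hvalid : ∀ x : Fin (n 0) → ℝ, (∀ j, LB 0 j ≤ x j ∧ x j ≤ UB 0 j) →
      ∀ l, l < m' → ∀ i : Fin (n (l + 1)),
        LB (l + 1) i ≤ netA n W b x l i ∧ netA n W b x l i ≤ UB (l + 1) i)
    (nIdx : Fin (n (m' + 1))) :
    {v : ℝ | ∃ (h : ∀ l : ℕ, Fin (n l) → ℝ) (a hbar z : ∀ l : ℕ, Fin (n (l + 1)) → ℝ),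
        (∀ l, l ≤ m' → ∀ i : Fin (n (l + 1)),
          (∑ j : Fin (n l), W l j i * h l j) + b l i = a l i) ∧
        (∀ l, l < m' → ∀ i : Fin (n (l + 1)),
          a l i = h (l + 1) i - hbar l i ∧
          0 ≤ h (l + 1) i ∧ h (l + 1) i ≤ UB (l + 1) i * z l i ∧
          0 ≤ hbar l i ∧ hbar l i ≤ -(LB (l + 1) i) * (1 - z l i) ∧
          (z l i = 0 ∨ z l i = 1)) ∧
        (∀ j : Fin (n 0), LB 0 j ≤ h 0 j ∧ h 0 j ≤ UB 0 j) ∧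
        v = a m' nIdx} =
      {v : ℝ | ∃ x : Fin (n 0) → ℝ,
        (∀ j, LB 0 j ≤ x j ∧ x j ≤ UB 0 j) ∧ v = netA n W b x m' nIdx} :=
  milp_value_set_eq_true_value_set_general m' n W b LB UB hvalid nIdx
end
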